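/- arXiv:2311.10026 — 4 statements merged into one kernel-verified Lean document; each statement's English description precedes it below -/
import Mathlib

section
/- Suppose r_in > σ·(1-γ) - L_in. Then high-return state-space sequences exist: for every state-space sequence ξ with ξ k ∈ G for all k ∈ ℕ and for every policy π, J^π(ξ) ≥ (r_in + L_in)/(1-γ) > σ. -/
/-! Along a trajectory that stays in `G` every step earns at least `r_in + L_in`, so the return
dominates the geometric series `∑ γ^k (r_in + L_in) = (r_in + L_in) / (1 - γ)`. The upper bound
`U_in` is what makes the return summable; without it `tsum` would be the junk value `0`. -/

section GeometricWeights

variable {γ L U : ℝ} {a : ℕ → ℝ}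

theorem summable_geometric_mul_of_bounded (hγ0 : 0 ≤ γ) (hγ1 : γ < 1)
    (hL : ∀ k, L ≤ a k) (hU : ∀ k, a k ≤ U) : Summable fun k ↦ γ ^ k * a k := by
  refine ((summable_geometric_of_lt_one hγ0 hγ1).mul_right (max |L| |U|)).of_norm_bounded
    fun k ↦ ?_
  rw [norm_mul, norm_pow, Real.norm_of_nonneg hγ0, Real.norm_eq_abs]
  exact mul_le_mul_of_nonneg_left (abs_le_max_abs_abs (hL k) (hU k)) (pow_nonneg hγ0 k)

theorem div_one_sub_le_tsum_geometric_mul (hγ0 : 0 ≤ γ) (hγ1 : γ < 1)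
    (hL : ∀ k, L ≤ a k) (hU : ∀ k, a k ≤ U) : L / (1 - γ) ≤ ∑' k, γ ^ k * a k := by
  have hgeom := summable_geometric_of_lt_one hγ0 hγ1
  calc L / (1 - γ) = ∑' k : ℕ, γ ^ k * L := by
        rw [tsum_mul_right, tsum_geometric_of_lt_one hγ0 hγ1, div_eq_inv_mul]
    _ ≤ ∑' k, γ ^ k * a k :=
        (hgeom.mul_right L).tsum_le_tsum
          (fun k ↦ mul_le_mul_of_nonneg_left (hL k) (pow_nonneg hγ0 k))
          (summable_geometric_mul_of_bounded hγ0 hγ1 hL hU)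

end GeometricWeights

theorem stmt7_general {X U : Type*}
    (G : Set X) (γ : ℝ) (hg0 : 0 ≤ γ) (hg1 : γ < 1)
    (rb : X → X → U → ℝ) (Lin Uin : ℝ)
    (hUin : ∀ (x' x : X) (u : U), x' ∈ G → rb x' x u ≤ Uin)
    (hLin : ∀ (x' x : X) (u : U), x' ∈ G → Lin ≤ rb x' x u)
    (rin : ℝ) (rc : X → X → ℝ)
    (hrc_in : ∀ (x' x : X), x' ∈ G → rc x' x = rin)
    (r : X → X → U → ℝ)
    (hr : ∀ (x' x : X) (u : U), r x' x u = rb x' x u + rc x' x)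
    (σ : ℝ)
    (hrin : rin > σ * (1 - γ) - Lin)
    (ξ : ℕ → X) (hall : ∀ k : ℕ, ξ k ∈ G) (π : X → U) :
    (∑' k : ℕ, γ ^ k * r (ξ (k + 1)) (ξ k) (π (ξ k))) ≥ (rin + Lin) / (1 - γ) ∧ (rin + Lin) / (1 - γ) > σ := by
  have hreward (k : ℕ) :
      r (ξ (k + 1)) (ξ k) (π (ξ k)) = rb (ξ (k + 1)) (ξ k) (π (ξ k)) + rin := by
    rw [hr, hrc_in _ _ (hall (k + 1))]
  refine ⟨div_one_sub_le_tsum_geometric_mul hg0 hg1 (U := Uin + rin)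
    (fun k ↦ ?_) (fun k ↦ ?_), ?_⟩
  · linarith [hreward k, hLin (ξ (k + 1)) (ξ k) (π (ξ k)) (hall (k + 1))]
  · linarith [hreward k, hUin (ξ (k + 1)) (ξ k) (π (ξ k)) (hall (k + 1))]
  · rw [gt_iff_lt, lt_div_iff₀ (by linarith)]
    linarith

theorem stmt7 {X U : Type*} [Nonempty U]
    (G : Set X) (γ : ℝ) (hg0 : 0 ≤ γ) (hg1 : γ < 1)
    (rb : X → X → U → ℝ) (Lout Uout Lin Uin : ℝ)
    (hUout : ∀ (x' x : X) (u : U), x' ∉ G → rb x' x u ≤ Uout)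
    (hLout : ∀ (x' x : X) (u : U), x' ∉ G → Lout ≤ rb x' x u)
    (hUin : ∀ (x' x : X) (u : U), x' ∈ G → rb x' x u ≤ Uin)
    (hLin : ∀ (x' x : X) (u : U), x' ∈ G → Lin ≤ rb x' x u)
    (rin rexit : ℝ) (rc : X → X → ℝ)
    (hrc_in : ∀ (x' x : X), x' ∈ G → rc x' x = rin)
    (hrc_exit : ∀ (x' x : X), x' ∉ G → x ∈ G → rc x' x = rexit)
    (hrc_zero : ∀ (x' x : X), x' ∉ G → x ∉ G → rc x' x = 0)
    (r : X → X → U → ℝ)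
    (hr : ∀ (x' x : X) (u : U), r x' x u = rb x' x u + rc x' x)
    (hG : G.Nonempty) (σ : ℝ)
    (hrin : rin > σ * (1 - γ) - Lin)
    (ξ : ℕ → X) (hall : ∀ k : ℕ, ξ k ∈ G) (π : X → U) :
    (∑' k : ℕ, γ ^ k * r (ξ (k + 1)) (ξ k) (π (ξ k))) ≥ (rin + Lin) / (1 - γ) ∧ (rin + Lin) / (1 - γ) > σ :=
  stmt7_general G γ hg0 hg1 rb Lin Uin hUin hLin rin rc hrc_in r hr σ hrin ξ hall π
end

section
/- Let k_z ∈ ℕ with k_z ≥ 1. If the state-space sequence ξ satisfies ξ k ∉ G for all k < k_z and ξ k ∈ G for all k ≥ k_z, then for every policy π, J^π(ξ) ≥ L_out·(1-γ^{k_z-1})/(1-γ) + (L_in + r_in)·γ^{k_z-1}/(1-γ). -/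
/-!
Before the goal is reached both endpoints of every transition lie outside `G`, so the reward is
the bounded reward alone and at least `L_out`; from step `k_z - 1` on, every transition lands in
`G`, so the reward is at least `L_in + r_in`. Comparing the return term by term with the
discounted sum of this step sequence gives the bound; summability comes from the rewards being
bounded on the tail, where they lie in `[L_in + r_in, U_in + r_in]`.
-/

open Set

section Discounted

variable {γ : ℝ} (hγ0 : 0 ≤ γ) (hγ1 : γ < 1)
include hγ0 hγ1

theorem hasSum_pow_mul_ite_lt (a b : ℝ) (m : ℕ) :
    HasSum (fun k => γ ^ k * if k < m then a else b)
      (a * (1 - γ ^ m) / (1 - γ) + b * γ ^ m / (1 - γ)) := by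
  have hhead : ∑ i ∈ Finset.range m, γ ^ i * (if i < m then a else b) =
      a * (1 - γ ^ m) / (1 - γ) := by
    rw [Finset.sum_congr rfl fun i hi => by rw [if_pos (Finset.mem_range.mp hi)],
      ← Finset.sum_mul, geom_sum_eq hγ1.ne m, mul_comm, ← neg_div_neg_eq, neg_sub, neg_sub,
      mul_div_assoc]
  have htail : (fun n => γ ^ (n + m) * if n + m < m then a else b) =
      fun n => b * γ ^ m * γ ^ n := by
    funext n
    rw [if_neg (by omega), pow_add]
    ring
  rw [← hasSum_nat_add_iff' m, hhead, add_sub_cancel_left, htail]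
  exact (hasSum_geometric_of_lt_one hγ0 hγ1).mul_left (b * γ ^ m)

theorem summable_pow_mul_of_forall_ge_mem_Icc {ρ : ℕ → ℝ} {b c : ℝ} {m : ℕ}
    (h : ∀ k, m ≤ k → ρ k ∈ Icc b c) : Summable fun k => γ ^ k * ρ k := by
  refine .of_norm_bounded_eventually
    ((summable_geometric_of_lt_one hγ0 hγ1).mul_left (max |b| |c|)) ?_
  rw [Nat.cofinite_eq_atTop, Filter.eventually_atTop]
  refine ⟨m, fun k hk => ?_⟩
  rw [norm_mul, norm_pow, Real.norm_of_nonneg hγ0, Real.norm_eq_abs, mul_comm]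
  exact mul_le_mul_of_nonneg_right (abs_le_max_abs_abs (h k hk).1 (h k hk).2) (pow_nonneg hγ0 k)

theorem le_tsum_pow_mul_of_step {ρ : ℕ → ℝ} {a b c : ℝ} {m : ℕ}
    (hbefore : ∀ k < m, a ≤ ρ k) (hafter : ∀ k, m ≤ k → ρ k ∈ Icc b c) :
    a * (1 - γ ^ m) / (1 - γ) + b * γ ^ m / (1 - γ) ≤ ∑' k, γ ^ k * ρ k := by
  refine hasSum_le (fun k => mul_le_mul_of_nonneg_left ?_ (pow_nonneg hγ0 k))
    (hasSum_pow_mul_ite_lt hγ0 hγ1 a b m)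
    (summable_pow_mul_of_forall_ge_mem_Icc hγ0 hγ1 hafter).hasSum
  split_ifs with hk
  · exact hbefore k hk
  · exact (hafter k (not_lt.mp hk)).1

end Discounted

theorem stmt11_general {X U : Type*}
    (G : Set X) (γ : ℝ) (hg0 : 0 ≤ γ) (hg1 : γ < 1)
    (rb : X → X → U → ℝ) (Lout Lin Uin : ℝ)
    (hLout : ∀ (x' x : X) (u : U), x' ∉ G → Lout ≤ rb x' x u)
    (hUin : ∀ (x' x : X) (u : U), x' ∈ G → rb x' x u ≤ Uin)
    (hLin : ∀ (x' x : X) (u : U), x' ∈ G → Lin ≤ rb x' x u)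
    (rin : ℝ) (rc : X → X → ℝ)
    (hrc_in : ∀ (x' x : X), x' ∈ G → rc x' x = rin)
    (hrc_zero : ∀ (x' x : X), x' ∉ G → x ∉ G → rc x' x = 0)
    (r : X → X → U → ℝ)
    (hr : ∀ (x' x : X) (u : U), r x' x u = rb x' x u + rc x' x)
    (kz : ℕ)
    (π : X → U) (ξ : ℕ → X)
    (hbefore : ∀ k < kz, ξ k ∉ G)
    (hafter : ∀ k, kz ≤ k → ξ k ∈ G) :
    (∑' k : ℕ, γ ^ k * r (ξ (k + 1)) (ξ k) (π (ξ k))) ≥ Lout * (1 - γ ^ (kz - 1)) / (1 - γ)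
      + (Lin + rin) * γ ^ (kz - 1) / (1 - γ) := by
  refine le_tsum_pow_mul_of_step hg0 hg1 (c := Uin + rin) (fun k hk => ?_) (fun k hk => ?_)
  · have hout : ξ (k + 1) ∉ G := hbefore _ (by omega)
    rw [hr, hrc_zero _ _ hout (hbefore k (by omega)), add_zero]
    exact hLout _ _ _ hout
  · have hin : ξ (k + 1) ∈ G := hafter _ (by omega)
    rw [hr, hrc_in _ _ hin]
    exact ⟨add_le_add_left (hLin _ (ξ k) _ hin) rin, add_le_add_left (hUin _ (ξ k) _ hin) rin⟩

theorem stmt11 {X U : Type*} [Nonempty U]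
    (G : Set X) (γ : ℝ) (hg0 : 0 ≤ γ) (hg1 : γ < 1)
    (rb : X → X → U → ℝ) (Lout Uout Lin Uin : ℝ)
    (hUout : ∀ (x' x : X) (u : U), x' ∉ G → rb x' x u ≤ Uout)
    (hLout : ∀ (x' x : X) (u : U), x' ∉ G → Lout ≤ rb x' x u)
    (hUin : ∀ (x' x : X) (u : U), x' ∈ G → rb x' x u ≤ Uin)
    (hLin : ∀ (x' x : X) (u : U), x' ∈ G → Lin ≤ rb x' x u)
    (rin rexit : ℝ) (rc : X → X → ℝ)
    (hrc_in : ∀ (x' x : X), x' ∈ G → rc x' x = rin)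
    (hrc_exit : ∀ (x' x : X), x' ∉ G → x ∈ G → rc x' x = rexit)
    (hrc_zero : ∀ (x' x : X), x' ∉ G → x ∉ G → rc x' x = 0)
    (r : X → X → U → ℝ)
    (hr : ∀ (x' x : X) (u : U), r x' x u = rb x' x u + rc x' x)
    (kz : ℕ) (hkz : 1 ≤ kz)
    (π : X → U) (ξ : ℕ → X)
    (hbefore : ∀ k < kz, ξ k ∉ G)
    (hafter : ∀ k, kz ≤ k → ξ k ∈ G) :
    (∑' k : ℕ, γ ^ k * r (ξ (k + 1)) (ξ k) (π (ξ k))) ≥ Lout * (1 - γ ^ (kz - 1)) / (1 - γ)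
      + (Lin + rin) * γ ^ (kz - 1) / (1 - γ) :=
  stmt11_general G γ hg0 hg1 rb Lout Lin Uin hLout hUin hLin rin rc hrc_in hrc_zero r hr kz π ξ
    hbefore hafter
end

section
/- Let γ ∈ ℝ with 0 < γ < 1, let k_s, k_p ∈ ℕ with k_s ≥ 1 and k_p ≥ 1, and let U_out, U_in, L_in, σ be real numbers with U_in ≥ L_in. If σ > U_out/(1-γ) + (U_in - L_in)·γ^{k_s}/((1-γ)·(1-γ^{k_s})), then σ ≥ U_out/(1-γ) and there exist real numbers r_in and r_exit such that: r_in ≥ U_out - L_in; r_in > σ·(1-γ) - L_in; r_in ≤ -U_in - U_out·(1-γ^{k_s})/γ^{k_s} + σ·(1-γ)/γ^{k_s}; and r_exit ≤ -U_out - (1/γ^{k_p-1})·[(U_in + r_in)·(1 + γ^{k_p-1}(γ-1))/(1-γ) - σ]. -/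
/-! Write `g = γ^ks` and `a = 1 - γ`. Clearing denominators, the hypothesis on `σ` reads
`Uout (1 - g) + (Uin - Lin) g < σ a (1 - g)`, which says exactly that the largest admissible
`rin`, namely `(σ a - Uout (1 - g))/g - Uin`, exceeds `σ a - Lin`. Since `Uin ≥ Lin`, the
hypothesis also gives `Uout ≤ σ a`, so this choice of `rin` is at least `Uout - Lin` as well;
`rexit` is then taken equal to its upper bound. -/

theorem lt_div_sub_of_div_add_div_lt {a g Uout Uin Lin σ : ℝ} (ha : 0 < a) (hg0 : 0 < g)
    (hg1 : g < 1) (h : Uout / a + (Uin - Lin) * g / (a * (1 - g)) < σ) :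
    σ * a - Lin < -Uin - Uout * (1 - g) / g + σ * a / g := by
  have h1g : 0 < 1 - g := sub_pos.2 hg1
  have hcleared : Uout * (1 - g) + (Uin - Lin) * g < σ * (a * (1 - g)) := by
    have e : Uout / a + (Uin - Lin) * g / (a * (1 - g))
        = (Uout * (1 - g) + (Uin - Lin) * g) / (a * (1 - g)) := by
      field_simp
    rwa [e, div_lt_iff₀ (by positivity)] at h
  have e : -Uin - Uout * (1 - g) / g + σ * a / g - (σ * a - Lin)
      = (σ * (a * (1 - g)) - (Uout * (1 - g) + (Uin - Lin) * g)) / g := by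
    field_simp
    ring
  rw [← sub_pos, e]
  exact div_pos (sub_pos.2 hcleared) hg0

theorem stmt13_general (γ : ℝ) (hg0 : 0 < γ) (hg1 : γ < 1)
    (ks kp : ℕ) (hks : 1 ≤ ks)
    (Uout Uin Lin σ : ℝ) (hUL : Uin ≥ Lin)
    (hσ : σ > Uout / (1 - γ) + (Uin - Lin) * γ ^ ks / ((1 - γ) * (1 - γ ^ ks))) :
    σ ≥ Uout / (1 - γ) ∧
    ∃ rin rexit : ℝ,
      rin ≥ Uout - Lin ∧
      rin > σ * (1 - γ) - Lin ∧
      rin ≤ -Uin - Uout * (1 - γ ^ ks) / γ ^ ks + σ * (1 - γ) / γ ^ ks ∧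
      rexit ≤ -Uout - (1 / γ ^ (kp - 1)) *
        ((Uin + rin) * (1 + γ ^ (kp - 1) * (γ - 1)) / (1 - γ) - σ) := by
  have h1g : 0 < 1 - γ := sub_pos.2 hg1
  have hgk0 : 0 < γ ^ ks := pow_pos hg0 ks
  have hgk1 : γ ^ ks < 1 := pow_lt_one₀ hg0.le hg1 (by omega)
  have hshift : 0 ≤ (Uin - Lin) * γ ^ ks / ((1 - γ) * (1 - γ ^ ks)) :=
    div_nonneg (mul_nonneg (sub_nonneg.2 hUL) hgk0.le) (mul_pos h1g (sub_pos.2 hgk1)).le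
  have hσ_ge : Uout / (1 - γ) ≤ σ := (le_add_of_nonneg_right hshift).trans hσ.le
  have hUout : Uout ≤ σ * (1 - γ) := (div_le_iff₀ h1g).1 hσ_ge
  have hrin := lt_div_sub_of_div_add_div_lt h1g hgk0 hgk1 hσ
  exact ⟨hσ_ge, _, _, by linarith, hrin, le_rfl, le_rfl⟩

theorem stmt13 (γ : ℝ) (hg0 : 0 < γ) (hg1 : γ < 1)
    (ks kp : ℕ) (hks : 1 ≤ ks) (hkp : 1 ≤ kp)
    (Uout Uin Lin σ : ℝ) (hUL : Uin ≥ Lin)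
    (hσ : σ > Uout / (1 - γ) + (Uin - Lin) * γ ^ ks / ((1 - γ) * (1 - γ ^ ks))) :
    σ ≥ Uout / (1 - γ) ∧
    ∃ rin rexit : ℝ,
      rin ≥ Uout - Lin ∧
      rin > σ * (1 - γ) - Lin ∧
      rin ≤ -Uin - Uout * (1 - γ ^ ks) / γ ^ ks + σ * (1 - γ) / γ ^ ks ∧
      rexit ≤ -Uout - (1 / γ ^ (kp - 1)) *
        ((Uin + rin) * (1 + γ ^ (kp - 1) * (γ - 1)) / (1 - γ) - σ) :=
  stmt13_general γ hg0 hg1 ks kp hks Uout Uin Lin σ hUL hσ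
end

section
/- Let γ ∈ ℝ with 0 < γ < 1, let k_s, k_p, k_z ∈ ℕ with 1 ≤ k_z ≤ k_s and k_p ≥ 1, and let U_out, L_out, U_in, L_in, σ be real numbers with U_in ≥ L_in and U_out ≥ L_out. Write Δ_in = U_in - L_in and Δ_out = U_out - L_out. If σ > Δ_in·γ^{k_s}/((1-γ)·(1-γ^{k_s})) + U_out/(1-γ) + (γ^{k_s}·(1-γ^{k_z-1})/((1-γ)·(γ^{k_z-1} - γ^{k_s})))·(γ^{k_s}·Δ_in/(1-γ^{k_s}) + Δ_out), then there exist real numbers r_in and r_exit such that: r_in ≥ U_out - L_in; r_in > σ·(1-γ) - L_in; r_in > -L_in - L_out·(1-γ^{k_z-1})/γ^{k_z-1} + σ·(1-γ)/γ^{k_z-1}; r_in ≤ -U_in - U_out·(1-γ^{k_s})/γ^{k_s} + σ·(1-γ)/γ^{k_s}; σ ≥ U_out/(1-γ); and r_exit ≤ -U_out - (1/γ^{k_p-1})·[(U_in + r_in)·(1 + γ^{k_p-1}(γ-1))/(1-γ) - σ]. -/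
/-!
Write `s = σ (1 - γ)`. A trajectory earning `b` per step before entering the goal and `a + r_in`
afterwards, entering with discount `g`, has return exactly `σ` when `r_in = b - a + (s - b) / g`
(`criticalReward g a b s`). Take `r_in` to be this critical value for the best trajectory entering
at time `k_s` (`g = γ^{k_s}`, `a = U_in`, `b = U_out`). After clearing denominators, the hypothesis
on `σ` says exactly that this `r_in` exceeds the critical value of the worst trajectory entering at time
`k_z - 1`; since the critical value decreases in `g` once `b ≤ s`, it also exceeds the one at
`g = 1`, which gives the remaining bounds. `r_exit` is taken equal to its upper bound.
-/

noncomputable def criticalReward (g a b s : ℝ) : ℝ := -a - b * (1 - g) / g + s / g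

/-- `(1 - γ)` times the lower bound assumed on `σ`, written with `A = γ^{k_s}`, `B = γ^{k_z - 1}`. -/
noncomputable def returnThreshold (A B Uin Lin Uout Lout : ℝ) : ℝ :=
  (Uin - Lin) * A / (1 - A) + Uout
    + A * (1 - B) / (B - A) * (A * (Uin - Lin) / (1 - A) + (Uout - Lout))

section

variable {g g' a b s A B Uin Lin Uout Lout : ℝ}

theorem criticalReward_one : criticalReward 1 a b s = s - a := by
  simp only [criticalReward, sub_self, mul_zero, div_one]
  ring

theorem criticalReward_eq (hg : g ≠ 0) : criticalReward g a b s = b - a + (s - b) / g := by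
  unfold criticalReward
  field_simp
  ring

theorem criticalReward_anti (hg : 0 < g) (hgg' : g ≤ g') (hbs : b ≤ s) :
    criticalReward g' a b s ≤ criticalReward g a b s := by
  rw [criticalReward_eq hg.ne', criticalReward_eq (hg.trans_le hgg').ne']
  gcongr

theorem le_returnThreshold (hA : 0 < A) (hAB : A < B) (hB : B ≤ 1)
    (hin : Lin ≤ Uin) (hout : Lout ≤ Uout) :
    Uout ≤ returnThreshold A B Uin Lin Uout Lout := by
  have hin' : 0 ≤ Uin - Lin := sub_nonneg.2 hin
  have hout' : 0 ≤ Uout - Lout := sub_nonneg.2 hout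
  have hA1 : 0 ≤ 1 - A := by linarith
  have hB' : 0 ≤ 1 - B := by linarith
  have hAB' : 0 ≤ B - A := by linarith
  have : 0 ≤ (Uin - Lin) * A / (1 - A) := by positivity
  have : 0 ≤ A * (1 - B) / (B - A) * (A * (Uin - Lin) / (1 - A) + (Uout - Lout)) := by positivity
  unfold returnThreshold
  linarith

theorem criticalReward_sub_criticalReward (hA : 0 < A) (hAB : A < B) (hA1 : A < 1) :
    criticalReward A Uin Uout s - criticalReward B Lin Lout s =
      (s - returnThreshold A B Uin Lin Uout Lout) * (B - A) / (A * B) := by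
  have : (1 - A) ≠ 0 := by linarith
  have : B - A ≠ 0 := by linarith
  have : B ≠ 0 := by linarith
  unfold criticalReward returnThreshold
  field_simp
  ring

theorem criticalReward_lt_criticalReward (hA : 0 < A) (hAB : A < B) (hA1 : A < 1)
    (hs : returnThreshold A B Uin Lin Uout Lout < s) :
    criticalReward B Lin Lout s < criticalReward A Uin Uout s := by
  rw [← sub_pos, criticalReward_sub_criticalReward hA hAB hA1]
  exact div_pos (mul_pos (sub_pos.2 hs) (sub_pos.2 hAB)) (mul_pos hA (hA.trans hAB))

end

theorem stmt14_general (γ : ℝ) (hg0 : 0 < γ) (hg1 : γ < 1)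
    (ks kp kz : ℕ) (hkz1 : 1 ≤ kz) (hkzs : kz ≤ ks)
    (Uout Lout Uin Lin σ : ℝ) (hULin : Uin ≥ Lin) (hULout : Uout ≥ Lout)
    (hσ : σ > (Uin - Lin) * γ ^ ks / ((1 - γ) * (1 - γ ^ ks)) + Uout / (1 - γ)
      + (γ ^ ks * (1 - γ ^ (kz - 1)) / ((1 - γ) * (γ ^ (kz - 1) - γ ^ ks))) *
        (γ ^ ks * (Uin - Lin) / (1 - γ ^ ks) + (Uout - Lout))) :
    ∃ rin rexit : ℝ,
      rin ≥ Uout - Lin ∧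
      rin > σ * (1 - γ) - Lin ∧
      rin > -Lin - Lout * (1 - γ ^ (kz - 1)) / γ ^ (kz - 1)
        + σ * (1 - γ) / γ ^ (kz - 1) ∧
      rin ≤ -Uin - Uout * (1 - γ ^ ks) / γ ^ ks + σ * (1 - γ) / γ ^ ks ∧
      σ ≥ Uout / (1 - γ) ∧
      rexit ≤ -Uout - (1 / γ ^ (kp - 1)) *
        ((Uin + rin) * (1 + γ ^ (kp - 1) * (γ - 1)) / (1 - γ) - σ) := by
  set A := γ ^ ks
  set B := γ ^ (kz - 1)
  have hA : 0 < A := pow_pos hg0 ks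
  have hAB : A < B := pow_lt_pow_right_of_lt_one₀ hg0 hg1 (by omega)
  have hB1 : B ≤ 1 := pow_le_one₀ hg0.le hg1.le
  have hA1 : A < 1 := hAB.trans_le hB1
  have hs : returnThreshold A B Uin Lin Uout Lout < σ * (1 - γ) := by
    rw [← div_lt_iff₀ (sub_pos.2 hg1)]
    refine (le_of_eq ?_).trans_lt hσ
    simp only [returnThreshold, div_eq_mul_inv, mul_inv]
    ring
  have hUout := (le_returnThreshold hA hAB hB1 hULin hULout).trans_lt hs
  have hentry := criticalReward_lt_criticalReward hA hAB hA1 hs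
  have hone : σ * (1 - γ) - Lin ≤ criticalReward B Lin Lout (σ * (1 - γ)) := by
    rw [← criticalReward_one]
    exact criticalReward_anti (hA.trans hAB) hB1 (hULout.trans hUout.le)
  refine ⟨criticalReward A Uin Uout (σ * (1 - γ)), _, ?_, hone.trans_lt hentry, hentry, le_rfl,
    (div_le_iff₀ (sub_pos.2 hg1)).2 hUout.le, le_rfl⟩
  linarith

theorem stmt14 (γ : ℝ) (hg0 : 0 < γ) (hg1 : γ < 1)
    (ks kp kz : ℕ) (hkz1 : 1 ≤ kz) (hkzs : kz ≤ ks) (hkp : 1 ≤ kp)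
    (Uout Lout Uin Lin σ : ℝ) (hULin : Uin ≥ Lin) (hULout : Uout ≥ Lout)
    (hσ : σ > (Uin - Lin) * γ ^ ks / ((1 - γ) * (1 - γ ^ ks)) + Uout / (1 - γ)
      + (γ ^ ks * (1 - γ ^ (kz - 1)) / ((1 - γ) * (γ ^ (kz - 1) - γ ^ ks))) *
        (γ ^ ks * (Uin - Lin) / (1 - γ ^ ks) + (Uout - Lout))) :
    ∃ rin rexit : ℝ,
      rin ≥ Uout - Lin ∧
      rin > σ * (1 - γ) - Lin ∧
      rin > -Lin - Lout * (1 - γ ^ (kz - 1)) / γ ^ (kz - 1)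
        + σ * (1 - γ) / γ ^ (kz - 1) ∧
      rin ≤ -Uin - Uout * (1 - γ ^ ks) / γ ^ ks + σ * (1 - γ) / γ ^ ks ∧
      σ ≥ Uout / (1 - γ) ∧
      rexit ≤ -Uout - (1 / γ ^ (kp - 1)) *
        ((Uin + rin) * (1 + γ ^ (kp - 1) * (γ - 1)) / (1 - γ) - σ) :=
  stmt14_general γ hg0 hg1 ks kp kz hkz1 hkzs Uout Lout Uin Lin σ hULin hULout hσ
end
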